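/- Fix a real v > 1/2 and a tie-breaking rule. Let μ be a mixed strategy for AND with marginal CDFs F₁ x = μ{p : p.1 ≤ x} and F₂ y = μ{p : p.2 ≤ y}, and let μ' be a mixed strategy with the same marginals that is maximally correlated, i.e. μ'{p : p.1 ≤ x and p.2 ≤ y} = min (F₁ x) (F₂ y) for all x, y. Then μ' weakly dominates μ as a strategy of AND: U_and(μ', ν) ≥ U_and(μ, ν) for every mixed strategy ν of OR. -/

import Mathlib

open MeasureTheory Set
open scoped ENNReal

noncomputable section

/-- A bid profile for one player: a bid on each of the two items. -/
abbrev Bid := ℝ × ℝ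

/-- The maximum allowed bid `H = max 1 v`. -/
def Hval (v : ℝ) : ℝ := max 1 v

/-- The set of allowed bids `[0,H] × [0,H]`. -/
def box (v : ℝ) : Set Bid := Icc (0:ℝ) (Hval v) ×ˢ Icc (0:ℝ) (Hval v)

/-- A tie-breaking rule: measurable functions `t₁ t₂ : ℝ → [0,1]`, where `tᵢ x` is the
probability that AND wins item `i` when both players bid `x` on it. -/
structure TieRule where
  t1 : ℝ → ℝ
  t2 : ℝ → ℝ
  meas1 : Measurable t1
  meas2 : Measurable t2
  t1_nonneg : ∀ x, 0 ≤ t1 x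
  t1_le_one : ∀ x, t1 x ≤ 1
  t2_nonneg : ∀ x, 0 ≤ t2 x
  t2_le_one : ∀ x, t2 x ≤ 1

/-- Probability that AND wins item 1 with bids `a` (AND) and `b` (OR). -/
def q1 (T : TieRule) (a b : Bid) : ℝ :=
  if b.1 < a.1 then 1 else if a.1 = b.1 then T.t1 a.1 else 0

/-- Probability that AND wins item 2 with bids `a` (AND) and `b` (OR). -/
def q2 (T : TieRule) (a b : Bid) : ℝ :=
  if b.2 < a.2 then 1 else if a.2 = b.2 then T.t2 a.2 else 0

/-- Expected utility of the AND player at the pure profile `(a,b)`. -/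
def uAnd (T : TieRule) (a b : Bid) : ℝ :=
  q1 T a b * q2 T a b - a.1 * q1 T a b - a.2 * q2 T a b

/-- Expected utility of the OR player at the pure profile `(a,b)`. -/
def uOr (v : ℝ) (T : TieRule) (a b : Bid) : ℝ :=
  v * (1 - q1 T a b * q2 T a b) - b.1 * (1 - q1 T a b) - b.2 * (1 - q2 T a b)

/-- A mixed strategy: a Borel probability measure on `ℝ × ℝ` supported in the box. -/
def IsMixed (v : ℝ) (μ : Measure Bid) : Prop :=
  IsProbabilityMeasure μ ∧ μ (box v) = 1

/-- Expected utility of AND under mixed strategies. -/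
def UAnd (T : TieRule) (μ ν : Measure Bid) : ℝ :=
  ∫ p, uAnd T p.1 p.2 ∂(μ.prod ν)

/-- Expected utility of OR under mixed strategies. -/
def UOr (v : ℝ) (T : TieRule) (μ ν : Measure Bid) : ℝ :=
  ∫ p, uOr v T p.1 p.2 ∂(μ.prod ν)

/-- `(μ,ν)` is a mixed Nash equilibrium of the AND–OR game. -/
def IsNash (v : ℝ) (T : TieRule) (μ ν : Measure Bid) : Prop :=
  IsMixed v μ ∧ IsMixed v ν ∧
  (∀ a ∈ box v, (∫ b, uAnd T a b ∂ν) ≤ UAnd T μ ν) ∧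
  (∀ b ∈ box v, (∫ a, uOr v T a b ∂μ) ≤ UOr v T μ ν)

/-- The uniform probability measure on `[0,1] ⊆ ℝ`. -/
def P01 : Measure ℝ := volume.restrict (Icc (0:ℝ) 1)

/-- The OR equilibrium strategy `ν*`: bid `(x,0)` or `(0,x)` with probability `1/2` each,
where `x ∈ [0,1/2]` has CDF `x/(1-x)`. -/
def nuStar : Measure Bid :=
  (1/2 : ℝ≥0∞) • Measure.map (fun u => (u/(1+u), (0:ℝ))) P01 +
  (1/2 : ℝ≥0∞) • Measure.map (fun u => ((0:ℝ), u/(1+u))) P01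

/-- Inverse-CDF map for the AND equilibrium bid distribution. -/
def gAnd (v u : ℝ) : ℝ := if 0 < u then max 0 (v - (v - 1/2)/u) else 0

/-- The AND equilibrium strategy `μ*`: bid `(y,y)` where `y ∈ [0,1/2]` has CDF
`(v-1/2)/(v-y)`, with an atom of mass `1 - 1/(2v)` at `0`. -/
def muStar (v : ℝ) : Measure Bid := Measure.map (fun u => (gAnd v u, gAnd v u)) P01

/-! For a fixed OR bid `b`, AND's payoff is `w₁ a₁ * w₂ a₂ - a₁ * w₁ a₁ - a₂ * w₂ a₂`, where the
winning probabilities `wᵢ` are nondecreasing in the own bid. The linear terms see only the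
marginals, and the product is a nonnegative combination of indicators of the four upper orthants
`{a₁ > b₁ or ≥ b₁} × {a₂ > b₂ or ≥ b₂}`. Maximal correlation gives `μ' ≥ μ` on closed lower
orthants; monotone limits extend this to half-open ones, and inclusion–exclusion with equal
marginals turns it into `μ' ≥ μ` on the complementary upper orthants. Fubini over OR's strategy
finishes the proof. -/

section ProductMeasure

variable {α β : Type*} [MeasurableSpace α] [MeasurableSpace β]

theorem measure_iUnion_le_of_monotone {γ : Type*} [MeasurableSpace γ] {μ μ' : Measure γ}
    {s : ℕ → Set γ} (hs : Monotone s) (h : ∀ n, μ (s n) ≤ μ' (s n)) :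
    μ (⋃ n, s n) ≤ μ' (⋃ n, s n) := by
  rw [hs.measure_iUnion, hs.measure_iUnion]
  exact iSup_mono h

theorem exists_monotone_iUnion_Iic_eq_Iio (x : ℝ) :
    ∃ u : ℕ → ℝ, Monotone u ∧ ⋃ n, Iic (u n) = Iio x := by
  obtain ⟨u, hu, hlt, hlim⟩ := exists_seq_strictMono_tendsto x
  exact ⟨u, hu.monotone, iUnion_Iic_eq_Iio_of_lt_of_tendsto hlt hlim⟩

theorem measure_Iio_prod_le {μ μ' : Measure (ℝ × β)} {B : Set β}
    (h : ∀ x, μ (Iic x ×ˢ B) ≤ μ' (Iic x ×ˢ B)) (x : ℝ) :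
    μ (Iio x ×ˢ B) ≤ μ' (Iio x ×ˢ B) := by
  obtain ⟨u, hu, hux⟩ := exists_monotone_iUnion_Iic_eq_Iio x
  rw [← hux, iUnion_prod_const]
  exact measure_iUnion_le_of_monotone
    (fun m n hmn => prod_mono (Iic_subset_Iic.2 (hu hmn)) subset_rfl) fun n => h (u n)

theorem measure_prod_Iio_le {μ μ' : Measure (α × ℝ)} {A : Set α}
    (h : ∀ y, μ (A ×ˢ Iic y) ≤ μ' (A ×ˢ Iic y)) (y : ℝ) :
    μ (A ×ˢ Iio y) ≤ μ' (A ×ˢ Iio y) := by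
  obtain ⟨u, hu, huy⟩ := exists_monotone_iUnion_Iic_eq_Iio y
  rw [← huy, prod_iUnion]
  exact measure_iUnion_le_of_monotone
    (fun m n hmn => prod_mono subset_rfl (Iic_subset_Iic.2 (hu hmn))) fun n => h (u n)

theorem measureReal_compl_prod_compl (ρ : Measure (α × β)) [IsFiniteMeasure ρ]
    {A : Set α} {B : Set β} (hA : MeasurableSet A) (hB : MeasurableSet B) :
    ρ.real (Aᶜ ×ˢ Bᶜ) = ρ.real univ - (ρ.map Prod.fst).real A - (ρ.map Prod.snd).real B
      + ρ.real (A ×ˢ B) := by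
  have hcompl : Aᶜ ×ˢ Bᶜ = (Prod.fst ⁻¹' A ∪ Prod.snd ⁻¹' B)ᶜ := by
    rw [compl_union, prod_eq, preimage_compl, preimage_compl]
  have hinter : Prod.fst ⁻¹' A ∩ Prod.snd ⁻¹' B = A ×ˢ B := (prod_eq A B).symm
  have hunion := measureReal_union_add_inter (μ := ρ) (s := Prod.fst ⁻¹' A)
    (measurable_snd hB)
  rw [hinter] at hunion
  rw [hcompl, measureReal_compl ((measurable_fst hA).union (measurable_snd hB)),
    map_measureReal_apply measurable_fst hA, map_measureReal_apply measurable_snd hB]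
  linarith

theorem measureReal_compl_prod_compl_le {μ μ' : Measure (α × β)}
    [IsFiniteMeasure μ] [IsFiniteMeasure μ']
    (h1 : μ.map Prod.fst = μ'.map Prod.fst) (h2 : μ.map Prod.snd = μ'.map Prod.snd)
    {A : Set α} {B : Set β} (hA : MeasurableSet A) (hB : MeasurableSet B)
    (h : μ.real (A ×ˢ B) ≤ μ'.real (A ×ˢ B)) : μ.real (Aᶜ ×ˢ Bᶜ) ≤ μ'.real (Aᶜ ×ˢ Bᶜ) := by
  have huniv : μ.real univ = μ'.real univ := by
    rw [← preimage_univ (f := Prod.fst), ← map_measureReal_apply measurable_fst .univ,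
      ← map_measureReal_apply measurable_fst .univ, h1]
  rw [measureReal_compl_prod_compl μ hA hB, measureReal_compl_prod_compl μ' hA hB, h1, h2, huniv]
  linarith

theorem integral_comp_fst_congr {μ μ' : Measure (α × β)}
    (h : μ.map Prod.fst = μ'.map Prod.fst) {f : α → ℝ} (hf : Measurable f) : ∫ a, f a.1 ∂μ = ∫ a, f a.1 ∂μ' := by
  rw [← integral_map measurable_fst.aemeasurable hf.aestronglyMeasurable, h,
    integral_map measurable_fst.aemeasurable hf.aestronglyMeasurable]

theorem integral_comp_snd_congr {μ μ' : Measure (α × β)}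
    (h : μ.map Prod.snd = μ'.map Prod.snd) {f : β → ℝ} (hf : Measurable f) : ∫ a, f a.2 ∂μ = ∫ a, f a.2 ∂μ' := by
  rw [← integral_map measurable_snd.aemeasurable hf.aestronglyMeasurable, h,
    integral_map measurable_snd.aemeasurable hf.aestronglyMeasurable]

end ProductMeasure

section UpperOrthant

variable {μ μ' : Measure (ℝ × ℝ)}

theorem measure_Iic_prod_Iic_le_of_eq_min
    (hmax : ∀ x y : ℝ, μ' {p : ℝ × ℝ | p.1 ≤ x ∧ p.2 ≤ y} =
      min (μ {p : ℝ × ℝ | p.1 ≤ x}) (μ {p : ℝ × ℝ | p.2 ≤ y})) (x y : ℝ) :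
    μ (Iic x ×ˢ Iic y) ≤ μ' (Iic x ×ˢ Iic y) := by
  rw [show Iic x ×ˢ Iic y = {p : ℝ × ℝ | p.1 ≤ x ∧ p.2 ≤ y} from rfl, hmax]
  exact le_min (measure_mono fun p hp => hp.1) (measure_mono fun p hp => hp.2)

theorem measure_lowerRay_prod_le (hlow : ∀ x y, μ (Iic x ×ˢ Iic y) ≤ μ' (Iic x ×ˢ Iic y))
    {A B : Set ℝ} {x y : ℝ} (hA : A = Iic x ∨ A = Iio x) (hB : B = Iic y ∨ B = Iio y) :
    μ (A ×ˢ B) ≤ μ' (A ×ˢ B) := by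
  have hIio_Iic : ∀ x y, μ (Iio x ×ˢ Iic y) ≤ μ' (Iio x ×ˢ Iic y) :=
    fun x y => measure_Iio_prod_le (fun x' => hlow x' y) x
  rcases hA with rfl | rfl <;> rcases hB with rfl | rfl
  · exact hlow x y
  · exact measure_prod_Iio_le (hlow x) y
  · exact hIio_Iic x y
  · exact measure_prod_Iio_le (hIio_Iic x) y

theorem measureReal_upperRay_prod_le [IsFiniteMeasure μ] [IsFiniteMeasure μ']
    (h1 : μ.map Prod.fst = μ'.map Prod.fst) (h2 : μ.map Prod.snd = μ'.map Prod.snd)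
    (hlow : ∀ x y, μ (Iic x ×ˢ Iic y) ≤ μ' (Iic x ×ˢ Iic y))
    {U V : Set ℝ} {x y : ℝ} (hU : U = Ioi x ∨ U = Ici x) (hV : V = Ioi y ∨ V = Ici y) :
    μ.real (U ×ˢ V) ≤ μ'.real (U ×ˢ V) := by
  have upperRay : ∀ {U : Set ℝ} {x : ℝ}, (U = Ioi x ∨ U = Ici x) →
      MeasurableSet U ∧ (Uᶜ = Iic x ∨ Uᶜ = Iio x) := by
    rintro U x (rfl | rfl)
    exacts [⟨measurableSet_Ioi, .inl compl_Ioi⟩, ⟨measurableSet_Ici, .inr compl_Ici⟩]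
  obtain ⟨hUm, hUc⟩ := upperRay hU
  obtain ⟨hVm, hVc⟩ := upperRay hV
  simpa only [compl_compl] using measureReal_compl_prod_compl_le h1 h2 hUm.compl hVm.compl
    (ENNReal.toReal_mono (measure_ne_top _ _) (measure_lowerRay_prod_le hlow hUc hVc))

end UpperOrthant

section WinProbability

theorem TieRule.t1_mem_Icc (T : TieRule) (x : ℝ) : T.t1 x ∈ Icc 0 1 :=
  ⟨T.t1_nonneg x, T.t1_le_one x⟩

theorem TieRule.t2_mem_Icc (T : TieRule) (x : ℝ) : T.t2 x ∈ Icc 0 1 :=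
  ⟨T.t2_nonneg x, T.t2_le_one x⟩

/-- The probability of winning an item with bid `x` against the bid `c` when ties are won with
probability `t`. -/
def winProb (t c x : ℝ) : ℝ := if c < x then 1 else if x = c then t else 0

theorem q1_eq_winProb (T : TieRule) (a b : Bid) : q1 T a b = winProb (T.t1 b.1) b.1 a.1 := by
  unfold q1 winProb
  split_ifs <;> simp_all

theorem q2_eq_winProb (T : TieRule) (a b : Bid) : q2 T a b = winProb (T.t2 b.2) b.2 a.2 := by
  unfold q2 winProb
  split_ifs <;> simp_all

theorem measurable_winProb (t c : ℝ) : Measurable (winProb t c) :=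
  Measurable.ite measurableSet_Ioi measurable_const
    (Measurable.ite (measurableSet_singleton c) measurable_const measurable_const)

theorem winProb_mem_Icc {t : ℝ} (ht : t ∈ Icc 0 1) (c x : ℝ) : winProb t c x ∈ Icc 0 1 := by
  unfold winProb
  split_ifs <;> simp [ht.1, ht.2]

theorem winProb_eq_indicator (t c x : ℝ) :
    winProb t c x = (1 - t) * (Ioi c).indicator 1 x + t * (Ici c).indicator 1 x := by
  rcases lt_trichotomy c x with h | rfl | h
  · simp [winProb, h, h.le]
  · simp [winProb]
  · simp [winProb, h.not_gt, h.ne, h.not_ge]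

theorem integral_winProb_mul_winProb {μ : Measure (ℝ × ℝ)} [IsFiniteMeasure μ] (s t c d : ℝ) :
    ∫ a, winProb s c a.1 * winProb t d a.2 ∂μ =
      (1 - s) * (1 - t) * μ.real (Ioi c ×ˢ Ioi d) + (1 - s) * t * μ.real (Ioi c ×ˢ Ici d)
      + s * (1 - t) * μ.real (Ici c ×ˢ Ioi d) + s * t * μ.real (Ici c ×ˢ Ici d) := by
  have hind : ∀ {S : Set (ℝ × ℝ)}, MeasurableSet S → Integrable (S.indicator 1) μ :=
    fun hS => (integrable_const (1 : ℝ)).indicator hS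
  have hpt : ∀ a : ℝ × ℝ, winProb s c a.1 * winProb t d a.2 =
      (1 - s) * (1 - t) * (Ioi c ×ˢ Ioi d).indicator 1 a
      + (1 - s) * t * (Ioi c ×ˢ Ici d).indicator 1 a
      + s * (1 - t) * (Ici c ×ˢ Ioi d).indicator 1 a
      + s * t * (Ici c ×ˢ Ici d).indicator 1 a := by
    rintro ⟨x, y⟩
    simp only [winProb_eq_indicator, indicator_prod_one]
    ring
  simp only [hpt]
  rw [integral_add, integral_add, integral_add]
  · simp [integral_const_mul, measurableSet_Ioi.prod, measurableSet_Ici.prod]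
  all_goals
    repeat' apply Integrable.add
    all_goals exact (hind (by measurability)).const_mul _

theorem integral_winProb_mul_winProb_le {μ μ' : Measure (ℝ × ℝ)}
    [IsFiniteMeasure μ] [IsFiniteMeasure μ'] {s t : ℝ} (hs : s ∈ Icc 0 1) (ht : t ∈ Icc 0 1)
    (c d : ℝ) (hdom : ∀ {U V : Set ℝ}, (U = Ioi c ∨ U = Ici c) → (V = Ioi d ∨ V = Ici d) →
      μ.real (U ×ˢ V) ≤ μ'.real (U ×ˢ V)) :
    ∫ a, winProb s c a.1 * winProb t d a.2 ∂μ ≤ ∫ a, winProb s c a.1 * winProb t d a.2 ∂μ' := by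
  obtain ⟨hs0, hs1⟩ := hs
  obtain ⟨ht0, ht1⟩ := ht
  rw [integral_winProb_mul_winProb, integral_winProb_mul_winProb]
  gcongr ?_ + ?_ + ?_ + ?_
  · exact mul_le_mul_of_nonneg_left (hdom (.inl rfl) (.inl rfl)) (by nlinarith)
  · exact mul_le_mul_of_nonneg_left (hdom (.inl rfl) (.inr rfl)) (by nlinarith)
  · exact mul_le_mul_of_nonneg_left (hdom (.inr rfl) (.inl rfl)) (by nlinarith)
  · exact mul_le_mul_of_nonneg_left (hdom (.inr rfl) (.inr rfl)) (by positivity)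

end WinProbability

theorem measurableSet_box (v : ℝ) : MeasurableSet (box v) :=
  measurableSet_Icc.prod measurableSet_Icc

namespace IsMixed

variable {v : ℝ} {ρ : Measure Bid}

theorem ae_mem_box (hρ : IsMixed v ρ) : ∀ᵐ a ∂ρ, a ∈ box v := by
  have := hρ.1
  exact (prob_compl_eq_zero_iff (measurableSet_box v)).2 hρ.2

theorem integrable (hρ : IsMixed v ρ) {f : Bid → ℝ} (hf : Measurable f) {C : ℝ}
    (hC : ∀ a ∈ box v, |f a| ≤ C) : Integrable f ρ :=
  haveI := hρ.1
  .of_bound hf.aestronglyMeasurable C (hρ.ae_mem_box.mono hC)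

end IsMixed

theorem measurable_q1 (T : TieRule) : Measurable fun p : Bid × Bid => q1 T p.1 p.2 :=
  Measurable.ite (measurableSet_lt measurable_snd.fst measurable_fst.fst) measurable_const
    (Measurable.ite (measurableSet_eq_fun measurable_fst.fst measurable_snd.fst)
      (T.meas1.comp measurable_fst.fst) measurable_const)

theorem measurable_q2 (T : TieRule) : Measurable fun p : Bid × Bid => q2 T p.1 p.2 :=
  Measurable.ite (measurableSet_lt measurable_snd.snd measurable_fst.snd) measurable_const
    (Measurable.ite (measurableSet_eq_fun measurable_fst.snd measurable_snd.snd)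
      (T.meas2.comp measurable_fst.snd) measurable_const)

theorem measurable_uAnd (T : TieRule) : Measurable fun p : Bid × Bid => uAnd T p.1 p.2 :=
  (((measurable_q1 T).mul (measurable_q2 T)).sub (measurable_fst.fst.mul (measurable_q1 T))).sub
    (measurable_fst.snd.mul (measurable_q2 T))

theorem abs_uAnd_le (T : TieRule) {v : ℝ} {a : Bid} (ha : a ∈ box v) (b : Bid) :
    |uAnd T a b| ≤ 1 + 2 * Hval v := by
  obtain ⟨⟨ha1, ha1'⟩, ⟨ha2, ha2'⟩⟩ := ha
  obtain ⟨hq1, hq1'⟩ := winProb_mem_Icc (T.t1_mem_Icc b.1) b.1 a.1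
  obtain ⟨hq2, hq2'⟩ := winProb_mem_Icc (T.t2_mem_Icc b.2) b.2 a.2
  rw [uAnd, q1_eq_winProb, q2_eq_winProb, abs_le]
  constructor <;> nlinarith

theorem integrable_uAnd (T : TieRule) {v : ℝ} {μ : Measure Bid} (hμ : IsMixed v μ)
    (ν : Measure Bid) [IsFiniteMeasure ν] :
    Integrable (fun p : Bid × Bid => uAnd T p.1 p.2) (μ.prod ν) :=
  haveI := hμ.1
  .of_bound (measurable_uAnd T).aestronglyMeasurable (1 + 2 * Hval v)
    ((Measure.quasiMeasurePreserving_fst.ae hμ.ae_mem_box).mono fun p hp => abs_uAnd_le T hp p.2)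

theorem integral_uAnd_eq (T : TieRule) {v : ℝ} {ρ : Measure Bid} (hρ : IsMixed v ρ) (b : Bid) :
    ∫ a, uAnd T a b ∂ρ =
      ∫ a, winProb (T.t1 b.1) b.1 a.1 * winProb (T.t2 b.2) b.2 a.2 ∂ρ
        - ∫ a, a.1 * winProb (T.t1 b.1) b.1 a.1 ∂ρ - ∫ a, a.2 * winProb (T.t2 b.2) b.2 a.2 ∂ρ := by
  set w₁ := winProb (T.t1 b.1) b.1
  set w₂ := winProb (T.t2 b.2) b.2
  have hw₁ : Measurable w₁ := measurable_winProb _ _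
  have hw₂ : Measurable w₂ := measurable_winProb _ _
  have hw : ∀ a : Bid, w₁ a.1 ∈ Icc 0 1 ∧ w₂ a.2 ∈ Icc 0 1 := fun a =>
    ⟨winProb_mem_Icc (T.t1_mem_Icc _) _ _, winProb_mem_Icc (T.t2_mem_Icc _) _ _⟩
  have hprod : Integrable (fun a : Bid => w₁ a.1 * w₂ a.2) ρ :=
    hρ.integrable (by fun_prop) (C := 1) fun a _ => by
      obtain ⟨⟨h0, h1⟩, h2, h3⟩ := hw a
      rw [abs_le]; constructor <;> nlinarith
  have hlin₁ : Integrable (fun a : Bid => a.1 * w₁ a.1) ρ :=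
    hρ.integrable (by fun_prop) (C := Hval v) fun a ⟨⟨ha0, ha1⟩, _⟩ => by
      obtain ⟨⟨h0, h1⟩, -⟩ := hw a
      rw [abs_le]; constructor <;> nlinarith
  have hlin₂ : Integrable (fun a : Bid => a.2 * w₂ a.2) ρ :=
    hρ.integrable (by fun_prop) (C := Hval v) fun a ⟨_, ⟨ha0, ha1⟩⟩ => by
      obtain ⟨-, h0, h1⟩ := hw a
      rw [abs_le]; constructor <;> nlinarith
  have hdiff : Integrable (fun a : Bid => w₁ a.1 * w₂ a.2 - a.1 * w₁ a.1) ρ := hprod.sub hlin₁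
  rw [← integral_sub hprod hlin₁, ← integral_sub hdiff hlin₂]
  simp only [uAnd, q1_eq_winProb, q2_eq_winProb]
  rfl

theorem integral_uAnd_le (T : TieRule) {v : ℝ} {μ μ' : Measure Bid}
    (hμ : IsMixed v μ) (hμ' : IsMixed v μ')
    (h1 : μ.map Prod.fst = μ'.map Prod.fst) (h2 : μ.map Prod.snd = μ'.map Prod.snd)
    (hlow : ∀ x y, μ (Iic x ×ˢ Iic y) ≤ μ' (Iic x ×ˢ Iic y)) (b : Bid) :
    ∫ a, uAnd T a b ∂μ ≤ ∫ a, uAnd T a b ∂μ' := by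
  have := hμ.1
  have := hμ'.1
  have hprod := integral_winProb_mul_winProb_le (T.t1_mem_Icc b.1) (T.t2_mem_Icc b.2) b.1 b.2
    (measureReal_upperRay_prod_le h1 h2 hlow)
  have hlin₁ := integral_comp_fst_congr h1 (f := fun x => x * winProb (T.t1 b.1) b.1 x)
    (measurable_id.mul (measurable_winProb _ _))
  have hlin₂ := integral_comp_snd_congr h2 (f := fun x => x * winProb (T.t2 b.2) b.2 x)
    (measurable_id.mul (measurable_winProb _ _))
  rw [integral_uAnd_eq T hμ b, integral_uAnd_eq T hμ' b]
  linarith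

theorem max_correlated_dominates_general (v : ℝ) (T : TieRule)
    (μ μ' : Measure Bid) (hμ : IsMixed v μ) (hμ' : IsMixed v μ')
    (h1 : Measure.map Prod.fst μ = Measure.map Prod.fst μ')
    (h2 : Measure.map Prod.snd μ = Measure.map Prod.snd μ')
    (hmax : ∀ x y : ℝ, μ' {p : Bid | p.1 ≤ x ∧ p.2 ≤ y} =
      min (μ {p : Bid | p.1 ≤ x}) (μ {p : Bid | p.2 ≤ y})) :
    ∀ ν : Measure Bid, IsMixed v ν → UAnd T μ ν ≤ UAnd T μ' ν := by
  intro ν hν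
  have := hμ.1
  have := hμ'.1
  have := hν.1
  have hi := integrable_uAnd T hμ ν
  have hi' := integrable_uAnd T hμ' ν
  rw [UAnd, UAnd, integral_prod_symm _ hi, integral_prod_symm _ hi']
  exact integral_mono hi.integral_prod_right hi'.integral_prod_right
    (integral_uAnd_le T hμ hμ' h1 h2 (measure_Iic_prod_Iic_le_of_eq_min hmax))

/-- If `μ'` has the same marginals as `μ` and is maximally correlated
(`μ'{p.1 ≤ x ∧ p.2 ≤ y} = min (F₁ x) (F₂ y)`), then `μ'` weakly dominates `μ` as a
strategy of AND. -/
theorem max_correlated_dominates (v : ℝ) (hv : 1/2 < v) (T : TieRule)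
    (μ μ' : Measure Bid) (hμ : IsMixed v μ) (hμ' : IsMixed v μ')
    (h1 : Measure.map Prod.fst μ = Measure.map Prod.fst μ')
    (h2 : Measure.map Prod.snd μ = Measure.map Prod.snd μ')
    (hmax : ∀ x y : ℝ, μ' {p : Bid | p.1 ≤ x ∧ p.2 ≤ y} =
      min (μ {p : Bid | p.1 ≤ x}) (μ {p : Bid | p.2 ≤ y})) :
    ∀ ν : Measure Bid, IsMixed v ν → UAnd T μ ν ≤ UAnd T μ' ν :=
  max_correlated_dominates_general v T μ μ' hμ hμ' h1 h2 hmax
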